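/- In the regularised RBM construction, the patterns ξ^1,…,ξ^H are the only strict local minima of the energy function under single spin flips: any configuration (v,h) that is not a pattern admits a single spin flip that does not increase (and in all but the degenerate plateau case strictly decreases) the energy, and from any configuration of the form (v, -e) there is a finite sequence of single spin flips with non-increasing energy terminating at a pattern. -/

import Mathlib

/-!
Flipping a spin changes the energy by minus the change of the spin times its local field.
Closure of the `v^α` under negation makes every column sum `∑_α v^α_j` vanish, so at `h = -e`
all visible fields vanish and visible flips are free: this walks `(x, -e)` to `(v^η, -e)`, where
switching `h_η` on changes the energy by `-4Aλ_η < 0`. A hidden unit `γ` that is on while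
`x ≠ v^γ` has field `2A(x·v^γ + λ_γ - V) ≤ 2A(λ_γ - 2) < 0`, so switching it off lowers the
energy; if there is no such unit, injectivity of `v` leaves only the patterns and `h = -e`.
-/

open Finset

/-- Energy of the regularised RBM with weights `W j α = 2 A v α j`, zero visible
biases and hidden biases `c α = 2 A (λ α - V)`. -/
noncomputable def raEnergy {V H : ℕ} (A : ℝ) (lam : Fin H → ℝ)
    (v : Fin H → Fin V → ℝ) (x : Fin V → ℝ) (h : Fin H → ℝ) : ℝ :=
  -(∑ j, ∑ α, x j * (2 * A * v α j) * h α)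
    - ∑ α, (2 * A * (lam α - (V : ℝ))) * h α

/-- Overlap `S α η = v^α · v^η`. -/
noncomputable def raOverlap {V H : ℕ} (v : Fin H → Fin V → ℝ) (α η : Fin H) : ℝ :=
  ∑ j, v α j * v η j

/-- `c'` is obtained from `c` by a single spin flip (visible or hidden). -/
def SingleFlip {V H : ℕ} (c c' : (Fin V → ℝ) × (Fin H → ℝ)) : Prop :=
  (∃ j, c'.1 = Function.update c.1 j (-(c.1 j)) ∧ c'.2 = c.2) ∨
  (∃ α, c'.1 = c.1 ∧ c'.2 = Function.update c.2 α (-(c.2 α)))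

open Matrix Function Relation

theorem Finset.sum_eq_zero_of_injective_of_forall_exists_eq_neg {ι G : Type*} [Fintype ι]
    [AddCommGroup G] [IsAddTorsionFree G] {f : ι → G} (hf : Injective f)
    (hneg : ∀ i, ∃ i', f i' = -f i) : ∑ i, f i = 0 := by
  choose σ hσ using hneg
  have hσinj : Injective σ := fun a b hab => hf <| neg_injective <| by rw [← hσ, ← hσ, hab]
  have hsum : ∑ i, f i = -∑ i, f i := calc
    ∑ i, f i = ∑ i, f (σ i) :=
      (Fintype.sum_bijective σ hσinj.bijective_of_finite _ _ fun _ => rfl).symm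
    _ = -∑ i, f i := by simp only [hσ, Finset.sum_neg_distrib]
  exact self_eq_neg.mp hsum

theorem Matrix.update_dotProduct {ι α : Type*} [Fintype ι] [DecidableEq ι]
    [NonUnitalNonAssocRing α] (x w : ι → α) (j : ι) (c : α) :
    update x j c ⬝ᵥ w = x ⬝ᵥ w + (c - x j) * w j := by
  have hx : update x j c = x + Pi.single j (c - x j) := by
    ext i
    rcases eq_or_ne i j with rfl | hi <;> simp [*]
  rw [hx, add_dotProduct, single_dotProduct]

section Spins

variable {a b : ℝ}

theorem mul_self_eq_one_of_sign (ha : a = 1 ∨ a = -1) : a * a = 1 := by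
  rcases ha with rfl | rfl <;> norm_num

theorem mul_le_one_of_sign (ha : a = 1 ∨ a = -1) (hb : b = 1 ∨ b = -1) : a * b ≤ 1 := by
  rcases ha with rfl | rfl <;> rcases hb with rfl | rfl <;> norm_num

theorem mul_eq_neg_one_of_sign_of_ne (ha : a = 1 ∨ a = -1) (hb : b = 1 ∨ b = -1) (hab : a ≠ b) :
    a * b = -1 := by
  rcases ha with rfl | rfl <;> rcases hb with rfl | rfl <;> norm_num at *

theorem eq_or_eq_neg_of_sign (ha : a = 1 ∨ a = -1) (hb : b = 1 ∨ b = -1) : b = a ∨ b = -a := by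
  rcases ha with rfl | rfl <;> rcases hb with rfl | rfl <;> norm_num

variable {ι : Type*} [Fintype ι] {x w : ι → ℝ}

theorem dotProduct_self_of_sign (hx : ∀ i, x i = 1 ∨ x i = -1) : x ⬝ᵥ x = Fintype.card ι := by
  simp [dotProduct, mul_self_eq_one_of_sign (hx _)]

theorem dotProduct_le_card_sub_two_of_ne (hx : ∀ i, x i = 1 ∨ x i = -1)
    (hw : ∀ i, w i = 1 ∨ w i = -1) (hne : x ≠ w) : x ⬝ᵥ w ≤ Fintype.card ι - 2 := by
  obtain ⟨i₀, hi₀⟩ := Function.ne_iff.mp hne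
  have hgap : 1 - x i₀ * w i₀ ≤ ∑ i, (1 - x i * w i) :=
    Finset.single_le_sum (fun i _ => sub_nonneg.mpr (mul_le_one_of_sign (hx i) (hw i)))
      (Finset.mem_univ i₀)
  rw [Finset.sum_sub_distrib, mul_eq_neg_one_of_sign_of_ne (hx i₀) (hw i₀) hi₀] at hgap
  simp only [Finset.sum_const, Finset.card_univ, nsmul_eq_mul, mul_one] at hgap
  rw [dotProduct]
  linarith

end Spins

theorem Relation.reflTransGen_of_forall_eq_or_eq_neg {ι α : Type*} [Fintype ι] [DecidableEq ι]
    [Neg α] {r : (ι → α) → (ι → α) → Prop} (hr : ∀ y j, r y (update y j (-y j)))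
    {y z : ι → α} (hyz : ∀ j, z j = y j ∨ z j = -y j) : ReflTransGen r y z := by
  suffices ∀ s : Finset ι, ReflTransGen r y (s.piecewise z y) by
    simpa using this Finset.univ
  intro s
  induction s using Finset.induction_on with
  | empty => exact ReflTransGen.refl
  | insert j s hj ih =>
    have hyj : s.piecewise z y j = y j := Finset.piecewise_eq_of_notMem _ _ _ hj
    rw [Finset.piecewise_insert]
    rcases hyz j with h | h
    · rwa [h, ← hyj, update_eq_self]
    · rw [h, ← hyj]
      exact ih.tail (hr _ _)

section RegularisedRBM

variable {V H : ℕ} {A : ℝ} {lam : Fin H → ℝ} {v : Fin H → Fin V → ℝ}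

/-- The local field `∑_α W_{jα} h_α` on visible unit `j`. -/
noncomputable def raVisibleField (A : ℝ) (v : Fin H → Fin V → ℝ) (h : Fin H → ℝ) (j : Fin V) :
    ℝ :=
  ∑ α, 2 * A * v α j * h α

/-- The local field `∑_j x_j W_{jα} + c_α` on hidden unit `α`. -/
noncomputable def raHiddenField (A : ℝ) (lam : Fin H → ℝ) (v : Fin H → Fin V → ℝ)
    (x : Fin V → ℝ) (α : Fin H) : ℝ :=
  2 * A * (x ⬝ᵥ v α + lam α - V)

theorem raEnergy_eq_visible (x : Fin V → ℝ) (h : Fin H → ℝ) :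
    raEnergy A lam v x h
      = -(x ⬝ᵥ raVisibleField A v h) - ∑ α, 2 * A * (lam α - V) * h α := by
  simp only [raEnergy, dotProduct, raVisibleField, Finset.mul_sum, mul_assoc]

theorem raEnergy_eq_hidden (x : Fin V → ℝ) (h : Fin H → ℝ) :
    raEnergy A lam v x h = -(h ⬝ᵥ raHiddenField A lam v x) := by
  simp only [raEnergy, dotProduct, raHiddenField]
  rw [Finset.sum_comm, ← neg_add', ← Finset.sum_add_distrib]
  congr 1
  refine Finset.sum_congr rfl fun α _ => ?_
  rw [← Finset.sum_mul]
  simp only [mul_left_comm _ (2 * A), ← Finset.mul_sum]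
  ring

theorem raEnergy_update_visible (x : Fin V → ℝ) (h : Fin H → ℝ) (j : Fin V) (c : ℝ) :
    raEnergy A lam v (update x j c) h
      = raEnergy A lam v x h - (c - x j) * raVisibleField A v h j := by
  rw [raEnergy_eq_visible, raEnergy_eq_visible, update_dotProduct]
  ring

theorem raEnergy_update_hidden (x : Fin V → ℝ) (h : Fin H → ℝ) (γ : Fin H) (c : ℝ) :
    raEnergy A lam v x (update h γ c)
      = raEnergy A lam v x h - (c - h γ) * raHiddenField A lam v x γ := by
  rw [raEnergy_eq_hidden, raEnergy_eq_hidden, update_dotProduct]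
  ring

theorem raVisibleField_neg_one (hcol : ∀ j, ∑ α, v α j = 0) (j : Fin V) :
    raVisibleField A v (fun _ => -1) j = 0 := by
  simp only [raVisibleField, mul_neg_one, Finset.sum_neg_distrib, ← Finset.mul_sum, hcol,
    mul_zero, neg_zero]

theorem raEnergy_flip_visible_of_hidden_neg_one (hcol : ∀ j, ∑ α, v α j = 0)
    (x : Fin V → ℝ) (j : Fin V) :
    raEnergy A lam v (update x j (-x j)) (fun _ => -1) = raEnergy A lam v x (fun _ => -1) := by
  rw [raEnergy_update_visible, raVisibleField_neg_one hcol, mul_zero, sub_zero]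

theorem raEnergy_flip_hidden_up_lt_of_pattern (hA : 0 < A) {η : Fin H} (hlam : 0 < lam η)
    (hv : ∀ j, v η j = 1 ∨ v η j = -1) {h : Fin H → ℝ} (hη : h η = -1) :
    raEnergy A lam v (v η) (update h η (-h η)) < raEnergy A lam v (v η) h := by
  rw [raEnergy_update_hidden, raHiddenField, hη, dotProduct_self_of_sign hv, Fintype.card_fin]
  nlinarith [mul_pos hA hlam]

theorem raEnergy_flip_hidden_down_lt (hA : 0 < A) {γ : Fin H} (hlam : lam γ < 2)
    {x : Fin V → ℝ} (hx : ∀ j, x j = 1 ∨ x j = -1) (hv : ∀ j, v γ j = 1 ∨ v γ j = -1)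
    (hxγ : x ≠ v γ) {h : Fin H → ℝ} (hγ : h γ = 1) :
    raEnergy A lam v x (update h γ (-h γ)) < raEnergy A lam v x h := by
  have hgap := dotProduct_le_card_sub_two_of_ne hx hv hxγ
  rw [Fintype.card_fin] at hgap
  rw [raEnergy_update_hidden, raHiddenField, hγ]
  nlinarith [mul_pos hA (by linarith : (0 : ℝ) < V - 2 - x ⬝ᵥ v γ + 2 - lam γ)]

variable (A lam v) in
def RaDescentStep (c c' : (Fin V → ℝ) × (Fin H → ℝ)) : Prop :=
  SingleFlip c c' ∧ raEnergy A lam v c'.1 c'.2 ≤ raEnergy A lam v c.1 c.2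

theorem raDescentStep_visible {x : Fin V → ℝ} {h : Fin H → ℝ} (j : Fin V)
    (hle : raEnergy A lam v (update x j (-x j)) h ≤ raEnergy A lam v x h) :
    RaDescentStep A lam v (x, h) (update x j (-x j), h) :=
  ⟨Or.inl ⟨j, rfl, rfl⟩, hle⟩

theorem raDescentStep_hidden {x : Fin V → ℝ} {h : Fin H → ℝ} (γ : Fin H)
    (hle : raEnergy A lam v x (update h γ (-h γ)) ≤ raEnergy A lam v x h) :
    RaDescentStep A lam v (x, h) (x, update h γ (-h γ)) :=
  ⟨Or.inr ⟨γ, rfl, rfl⟩, hle⟩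

theorem exists_raDescentStep_of_not_pattern (hA : 0 < A) (hlam : ∀ α, 0 < lam α ∧ lam α < 2)
    (hpm : ∀ η j, v η j = 1 ∨ v η j = -1) (hcol : ∀ j, ∑ α, v α j = 0) (hdist : Injective v)
    (η₀ : Fin H) {x : Fin V → ℝ} {h : Fin H → ℝ} (hx : ∀ j, x j = 1 ∨ x j = -1)
    (hh : ∀ α, h α = 1 ∨ h α = -1)
    (hnp : ¬∃ η, x = v η ∧ h = fun γ => if γ = η then 1 else -1) :
    ∃ c', RaDescentStep A lam v (x, h) c' := by
  by_cases hdown : ∃ γ, h γ = 1 ∧ x ≠ v γ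
  · obtain ⟨γ, hγ, hxγ⟩ := hdown
    exact ⟨_, raDescentStep_hidden γ
      (raEnergy_flip_hidden_down_lt hA (hlam γ).2 hx (hpm γ) hxγ hγ).le⟩
  push Not at hdown
  have hall : h = fun _ => -1 := by
    funext γ
    refine (hh γ).resolve_left fun hγ => hnp ⟨γ, hdown γ hγ, funext fun β => ?_⟩
    split_ifs with hβ
    · rwa [hβ]
    · exact (hh β).resolve_left fun hβ' => hβ (hdist ((hdown β hβ').symm.trans (hdown γ hγ)))
  subst hall
  by_cases hx₀ : x = v η₀
  · subst hx₀
    exact ⟨_, raDescentStep_hidden η₀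
      (raEnergy_flip_hidden_up_lt_of_pattern hA (hlam η₀).1 (hpm η₀) rfl).le⟩
  · obtain ⟨j, -⟩ := Function.ne_iff.mp hx₀
    exact ⟨_, raDescentStep_visible j (raEnergy_flip_visible_of_hidden_neg_one hcol x j).le⟩

theorem reflTransGen_raDescentStep_pattern (hA : 0 < A) (hlam : ∀ α, 0 < lam α ∧ lam α < 2)
    (hpm : ∀ η j, v η j = 1 ∨ v η j = -1) (hcol : ∀ j, ∑ α, v α j = 0) (η : Fin H) {x : Fin V → ℝ}
    (hx : ∀ j, x j = 1 ∨ x j = -1) :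
    ReflTransGen (RaDescentStep A lam v) (x, fun _ => -1)
      (v η, fun γ => if γ = η then 1 else -1) := by
  have hwalk : ReflTransGen (fun y z => RaDescentStep A lam v (y, fun _ => -1) (z, fun _ => -1))
      x (v η) :=
    reflTransGen_of_forall_eq_or_eq_neg
      (fun y j => raDescentStep_visible j (raEnergy_flip_visible_of_hidden_neg_one hcol y j).le)
      (fun j => eq_or_eq_neg_of_sign (hx j) (hpm η j))
  have hpattern :
      update (fun _ : Fin H => (-1 : ℝ)) η (-(-1)) = fun γ => if γ = η then 1 else -1 := by
    funext γ
    rw [update_apply, neg_neg]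
  have hup := raDescentStep_hidden (x := v η) (h := fun _ => -1) η
    (raEnergy_flip_hidden_up_lt_of_pattern hA (hlam η).1 (hpm η) rfl).le
  rw [hpattern] at hup
  exact (hwalk.lift (fun y => (y, fun _ => -1)) fun _ _ => id).tail hup

end RegularisedRBM

theorem regularised_patterns_only_local_minima
    (V H : ℕ) (hH : 1 ≤ H) (A : ℝ) (hA : 0 < A) (lam : Fin H → ℝ)
    (hlam : ∀ α, 3 / 4 < lam α ∧ lam α < 5 / 4)
    (v : Fin H → Fin V → ℝ)
    (hpm : ∀ η j, v η j = 1 ∨ v η j = -1)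
    (hdist : Function.Injective v)
    (hneg : ∀ η, ∃ η', ∀ j, v η' j = -(v η j)) :
    -- a single spin flip with non-increasing energy
    let step : ((Fin V → ℝ) × (Fin H → ℝ)) → ((Fin V → ℝ) × (Fin H → ℝ)) → Prop :=
      fun c c' => SingleFlip c c' ∧
        raEnergy A lam v c'.1 c'.2 ≤ raEnergy A lam v c.1 c.2
    -- (a) any non-pattern ±1 configuration admits a single spin flip that does
    -- not increase the energy
    (∀ x : Fin V → ℝ, ∀ h : Fin H → ℝ,
      (∀ j, x j = 1 ∨ x j = -1) → (∀ α, h α = 1 ∨ h α = -1) →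
      (¬∃ η, x = v η ∧ h = (fun γ => if γ = η then (1 : ℝ) else -1)) →
      ∃ c', step (x, h) c') ∧
    -- (b) from any configuration of the form (x, -e) a finite sequence of
    -- single spin flips with non-increasing energy reaches a pattern
    (∀ x : Fin V → ℝ, (∀ j, x j = 1 ∨ x j = -1) →
      ∃ η : Fin H, Relation.ReflTransGen step (x, fun _ => (-1 : ℝ))
        (v η, fun γ => if γ = η then (1 : ℝ) else -1)) := by
  intro step
  let η₀ : Fin H := ⟨0, hH⟩
  have hlam₀₂ : ∀ α, 0 < lam α ∧ lam α < 2 := fun α => ⟨by linarith [hlam α], by linarith [hlam α]⟩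
  have hcol : ∀ j, ∑ α, v α j = 0 := by
    have hsum := Finset.sum_eq_zero_of_injective_of_forall_exists_eq_neg hdist
      fun η => (hneg η).imp fun _ hη' => funext hη'
    intro j
    simpa using congrFun hsum j
  exact ⟨fun x h hx hh hnp =>
      exists_raDescentStep_of_not_pattern hA hlam₀₂ hpm hcol hdist η₀ hx hh hnp,
    fun x hx => ⟨η₀, reflTransGen_raDescentStep_pattern hA hlam₀₂ hpm hcol η₀ hx⟩⟩
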